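/- Under the scheme assumptions, let (U^j) and (V^j) be solutions of the scheme with data (u_0, f) and (v_0, g) respectively, where v_0 and g satisfy the same integrability assumptions as u_0 and f. If u_0 ≤ v_0 a.e. on ℝ^N and f ≤ g a.e. on ℝ^N × (0,T), then U^j ≤ V^j a.e. on ℝ^N for every j = 0,...,J. -/

import Mathlib

open MeasureTheory ENNReal
open scoped ENNReal NNReal

noncomputable section

/-- The zero-order Lévy operator `L^ν[ψ](x) := ∫ (ψ(x+z) − ψ(x)) dν(z)`. -/
def Lnu {N : ℕ} (ν : Measure (EuclideanSpace ℝ (Fin N)))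
    (ψ : EuclideanSpace ℝ (Fin N) → ℝ) (x : EuclideanSpace ℝ (Fin N)) : ℝ :=
  ∫ z, (ψ (x + z) - ψ x) ∂ν

/-- The time-averaged source term
`F^j(x) := (1/Δt_j) ∫_{t_{j−1}}^{t_j} f(x,t) dt`. -/
def Favg {N : ℕ} (t : ℕ → ℝ) (f : EuclideanSpace ℝ (Fin N) → ℝ → ℝ)
    (j : ℕ) (x : EuclideanSpace ℝ (Fin N)) : ℝ :=
  (t j - t (j - 1))⁻¹ * ∫ τ in Set.Ioc (t (j - 1)) (t j), f x τ

/-- `U = (U^j)_{j=0}^J` is a solution of the numerical scheme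
`U^j = U^{j−1} + Δt_j (L^{ν₁}[φ₁∘U^j] + L^{ν₂}[φ₂∘U^{j−1}] + F^j)` with data `u₀, f`:
each `U^j ∈ L¹ ∩ L^∞`, `U^0 = u₀` a.e., and each step holds a.e. -/
def IsSchemeSol {N : ℕ} (ν₁ ν₂ : Measure (EuclideanSpace ℝ (Fin N)))
    (φ₁ φ₂ : ℝ → ℝ) (t : ℕ → ℝ) (J : ℕ)
    (u₀ : EuclideanSpace ℝ (Fin N) → ℝ) (f : EuclideanSpace ℝ (Fin N) → ℝ → ℝ)
    (U : ℕ → EuclideanSpace ℝ (Fin N) → ℝ) : Prop :=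
  (∀ j ≤ J, Integrable (U j) volume ∧ MemLp (U j) ∞ volume) ∧
  U 0 =ᵐ[volume] u₀ ∧
  ∀ j, 1 ≤ j → j ≤ J →
    ∀ᵐ x ∂(volume : Measure (EuclideanSpace ℝ (Fin N))),
      U j x = U (j - 1) x + (t j - t (j - 1)) *
        (Lnu ν₁ (fun y => φ₁ (U j y)) x + Lnu ν₂ (fun y => φ₂ (U (j - 1) y)) x +
          Favg t f j x)

/-!
Induction on `j`. Under the CFL condition the explicit part `u ↦ u + Δ L^{ν₂}[φ₂ ∘ u]` is
monotone, being `u - Δ ν₂(ℝᴺ) φ₂(u)` plus a `ν₂`-average of translates of `φ₂ ∘ u`. For the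
implicit part put `w = φ₁ ∘ U^j - φ₁ ∘ V^j`; then `U^j - V^j ≤ Δ L^{ν₁}[w]`, so wherever `w > 0`
we have `ν₁(ℝᴺ) w(x) < ∫ w(x + z) dν₁(z)`. A nonnegative integrable function with this strict
property vanishes a.e.: integrating `∫ g(x + z) dν - ν(ℝᴺ) g(x) ≥ 0` in `x` gives `0` by
translation invariance of Lebesgue measure. This applies to the truncations `(w - ε)⁺`, which are
integrable because they vanish where `U^j - V^j` is small (uniform continuity of `φ₁`). Hence
`w ≤ 0` a.e., and then `0 < U^j - V^j ≤ Δ L^{ν₁}[w] ≤ 0` is impossible.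
-/

open Set Filter

theorem exists_pos_forall_sub_le_of_sub_lt {φ : ℝ → ℝ} (hφ : Continuous φ) (hφm : Monotone φ)
    (M : ℝ) {ε : ℝ} (hε : 0 < ε) :
    ∃ δ > 0, ∀ s s', |s| ≤ M → |s'| ≤ M → s - s' < δ → φ s - φ s' ≤ ε := by
  obtain ⟨δ, hδ, hδε⟩ := Metric.uniformContinuousOn_iff.mp
    (isCompact_Icc.uniformContinuousOn_of_continuous hφ.continuousOn) ε hε
  refine ⟨δ, hδ, fun s s' hs hs' hss' => ?_⟩
  rcases le_total s s' with h | h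
  · linarith [hφm h]
  · have hdist : dist s s' < δ := by rwa [Real.dist_eq, abs_of_nonneg (sub_nonneg.mpr h)]
    exact (le_abs_self _).trans (hδε s (abs_le.mp hs) s' (abs_le.mp hs') hdist).le

theorem monotone_sub_mul_of_lipschitzWith {φ : ℝ → ℝ} {L : ℝ≥0} (hφ : Monotone φ)
    (hL : LipschitzWith L φ) {k : ℝ} (hk : 0 ≤ k) (hkL : k * L ≤ 1) :
    Monotone fun s => s - k * φ s := by
  intro s s' h
  have hlip : φ s' - φ s ≤ L * (s' - s) := by
    have := hL.dist_le_mul s' s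
    rwa [Real.dist_eq, Real.dist_eq, abs_of_nonneg (sub_nonneg.mpr (hφ h)),
      abs_of_nonneg (sub_nonneg.mpr h)] at this
  nlinarith [mul_le_mul_of_nonneg_left hlip hk, mul_le_mul_of_nonneg_right hkL (sub_nonneg.mpr h)]

theorem Continuous.exists_forall_abs_comp_le {α : Type*} {φ : ℝ → ℝ} (hφ : Continuous φ)
    {u : α → ℝ} {M : ℝ} (hu : ∀ x, |u x| ≤ M) : ∃ B, ∀ x, |φ (u x)| ≤ B := by
  obtain ⟨B, hB⟩ := (isCompact_Icc (a := -M) (b := M)).exists_bound_of_continuousOn hφ.continuousOn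
  exact ⟨B, fun x => hB _ (abs_le.mp (hu x))⟩

theorem MeasureTheory.MemLp.exists_measurable_bounded_ae_eq {α : Type*} [MeasurableSpace α]
    {μ : Measure α} {f : α → ℝ} (hf : MemLp f ∞ μ) :
    ∃ g : α → ℝ, Measurable g ∧ (∃ M, ∀ x, |g x| ≤ M) ∧ f =ᵐ[μ] g := by
  set C := lpNorm f ∞ μ
  refine ⟨fun x => max (-C) (min (hf.1.mk f x) C),
    measurable_const.max (hf.1.stronglyMeasurable_mk.measurable.min measurable_const),
    ⟨C, fun x => abs_le.mpr ⟨le_max_left _ _, max_le (by simp [C]) (min_le_right _ _)⟩⟩, ?_⟩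
  filter_upwards [hf.1.ae_eq_mk, ae_le_lpNorm_exponent_top hf] with x hx hC
  rw [Real.norm_eq_abs, abs_le] at hC
  rw [← hx, min_eq_left hC.2, max_eq_right hC.1]

theorem ae_integrable_of_lintegral_eLpNorm_lt_top {α β : Type*} [MeasurableSpace α]
    [MeasurableSpace β] {μ : Measure α} {ν : Measure β} [SFinite μ] [SFinite ν]
    {f : α → β → ℝ} (hf : Measurable (Function.uncurry f))
    (h : ∫⁻ y, eLpNorm (fun x => f x y) 1 μ ∂ν < ∞) : ∀ᵐ x ∂μ, Integrable (f x) ν := by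
  have hint : Integrable (Function.uncurry f) (μ.prod ν) := by
    refine ⟨hf.aestronglyMeasurable, hasFiniteIntegral_iff_enorm.mpr ?_⟩
    rw [lintegral_prod_symm _ hf.enorm.aemeasurable]
    simpa only [eLpNorm_one_eq_lintegral_enorm, Function.uncurry_apply_pair] using h
  exact hint.prod_right_ae

section Translation

variable {G : Type*} [MeasurableSpace G] [AddGroup G] [MeasurableAdd₂ G]
  {μ : Measure G} [SFinite μ] [μ.IsAddRightInvariant] {ν : Measure G}

theorem ae_ae_add_of_ae [SFinite ν] {P : G → Prop} (h : ∀ᵐ y ∂μ, P y) :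
    ∀ᵐ x ∂μ, ∀ᵐ z ∂ν, P (x + z) :=
  Measure.ae_ae_of_ae_prod <| (Measure.quasiMeasurePreserving_fst.comp
    (measurePreserving_add_prod μ ν).quasiMeasurePreserving).ae h

theorem MeasureTheory.Integrable.comp_add_prod [IsFiniteMeasure ν] {g : G → ℝ}
    (hg : Integrable g μ) : Integrable (fun p : G × G => g (p.1 + p.2)) (μ.prod ν) :=
  ((measurePreserving_add_prod μ ν).integrable_comp (hg.comp_fst ν).aestronglyMeasurable).mpr
    (hg.comp_fst ν)

theorem integral_integral_comp_add [IsFiniteMeasure ν] {g : G → ℝ} (hg : Integrable g μ) :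
    ∫ x, ∫ z, g (x + z) ∂ν ∂μ = ν.real univ * ∫ x, g x ∂μ := by
  rw [integral_integral_swap hg.comp_add_prod]
  simp_rw [integral_add_right_eq_self g, integral_const, smul_eq_mul]

theorem integrable_comp_add_of_bound [IsFiniteMeasure ν] {ψ : G → ℝ} (hψ : Measurable ψ)
    {B : ℝ} (hB : ∀ x, |ψ x| ≤ B) (x : G) : Integrable (fun z => ψ (x + z)) ν :=
  Integrable.of_bound (hψ.comp (measurable_const_add x)).aestronglyMeasurable B
    (Eventually.of_forall fun z => hB (x + z))

theorem integral_comp_add_sub_of_bound [IsFiniteMeasure ν] {ψ : G → ℝ} (hψ : Measurable ψ)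
    {B : ℝ} (hB : ∀ x, |ψ x| ≤ B) (x : G) :
    ∫ z, (ψ (x + z) - ψ x) ∂ν = ∫ z, ψ (x + z) ∂ν - ν.real univ * ψ x := by
  rw [integral_sub (integrable_comp_add_of_bound hψ hB x) (integrable_const _),
    integral_const, smul_eq_mul]

theorem ae_eq_zero_of_lt_integral_comp_add [IsFiniteMeasure ν] {g : G → ℝ} (hg : Integrable g μ)
    (hg_nonneg : 0 ≤ g) (h : ∀ᵐ x ∂μ, 0 < g x → ν.real univ * g x < ∫ z, g (x + z) ∂ν) :
    g =ᵐ[μ] 0 := by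
  set excess : G → ℝ := fun x => ∫ z, g (x + z) ∂ν - ν.real univ * g x
  have hint : Integrable excess μ :=
    (hg.comp_add_prod (ν := ν)).integral_prod_left.sub (hg.const_mul _)
  have hpos : ∀ᵐ x ∂μ, 0 < g x → 0 < excess x := by
    filter_upwards [h] with x hx hgx
    exact sub_pos.mpr (hx hgx)
  have hnonneg : 0 ≤ᵐ[μ] excess := by
    filter_upwards [hpos] with x hx
    rcases (hg_nonneg x).eq_or_lt with hgx | hgx
    · simp only [excess, Pi.zero_apply, ← hgx, mul_zero, sub_zero]
      exact integral_nonneg fun z => hg_nonneg (x + z)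
    · exact (hx hgx).le
  have hzero : ∫ x, excess x ∂μ = 0 := by
    rw [integral_sub (hg.comp_add_prod (ν := ν)).integral_prod_left (hg.const_mul _),
      integral_integral_comp_add hg, integral_const_mul, sub_self]
  filter_upwards [(integral_eq_zero_iff_of_nonneg_ae hnonneg hint).mp hzero, hpos] with x hx hpx
  exact le_antisymm (not_lt.mp fun hgx => (hpx hgx).ne' hx) (hg_nonneg x)

/-- Apply `ae_eq_zero_of_lt_integral_comp_add` to the truncations `(w - ε)⁺`, which are
integrable even when `w` is not. -/
theorem ae_nonpos_of_lt_integral_comp_add [IsFiniteMeasure ν] {w : G → ℝ} (hw : Measurable w)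
    {B : ℝ} (hB : ∀ x, |w x| ≤ B) (hint : ∀ ε > 0, Integrable (fun x => max (w x - ε) 0) μ)
    (h : ∀ᵐ x ∂μ, 0 < w x → ν.real univ * w x < ∫ z, w (x + z) ∂ν) :
    ∀ᵐ x ∂μ, w x ≤ 0 := by
  have hle : ∀ ε > 0, ∀ᵐ x ∂μ, w x ≤ ε := by
    intro ε hε
    set g : G → ℝ := fun x => max (w x - ε) 0
    have hg : Measurable g := (hw.sub_const ε).max measurable_const
    have hgB : ∀ x, |g x| ≤ B + ε := fun x => by
      have := hB x
      simp only [g, abs_le] at this ⊢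
      constructor <;> cases max_cases (w x - ε) 0 <;> linarith
    have hg0 : g =ᵐ[μ] 0 := by
      refine ae_eq_zero_of_lt_integral_comp_add (ν := ν) (hint ε hε)
        (fun x => le_max_right _ _) ?_
      filter_upwards [h] with x hx hgx
      have hwε : ε < w x := by
        by_contra hc
        exact hgx.ne' (max_eq_right (by linarith))
      have hwx : g x = w x - ε := max_eq_left (sub_nonneg.mpr hwε.le)
      calc ν.real univ * g x < ∫ z, w (x + z) ∂ν - ν.real univ * ε := by
            rw [hwx, mul_sub]; linarith [hx (hε.trans hwε)]
        _ = ∫ z, (w (x + z) - ε) ∂ν := by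
            rw [integral_sub (integrable_comp_add_of_bound hw hB x) (integrable_const ε),
              integral_const, smul_eq_mul]
        _ ≤ ∫ z, g (x + z) ∂ν :=
            integral_mono ((integrable_comp_add_of_bound hw hB x).sub (integrable_const ε))
              (integrable_comp_add_of_bound (ν := ν) hg hgB x) fun z => le_max_left _ _
    filter_upwards [hg0] with x hx
    have : max (w x - ε) 0 = 0 := hx
    linarith [le_max_left (w x - ε) 0]
  have hall : ∀ᵐ x ∂μ, ∀ n : ℕ, w x ≤ 1 / (n + 1) :=
    ae_all_iff.mpr fun n => hle _ Nat.one_div_pos_of_nat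
  filter_upwards [hall] with x hx
  exact ge_of_tendsto' tendsto_one_div_add_atTop_nhds_zero_nat hx

theorem ae_le_of_sub_le_mul_integral_comp_add [IsFiniteMeasure ν] {φ : ℝ → ℝ}
    (hφ : Continuous φ) (hφm : Monotone φ) {u v : G → ℝ} (hu : Measurable u)
    (hv : Measurable v) {M : ℝ} (hub : ∀ x, |u x| ≤ M) (hvb : ∀ x, |v x| ≤ M)
    (huv : Integrable (u - v) μ) {c : ℝ} (hc : 0 ≤ c)
    (H : ∀ᵐ x ∂μ, u x - v x ≤
      c * (∫ z, (φ (u (x + z)) - φ (u x)) ∂ν - ∫ z, (φ (v (x + z)) - φ (v x)) ∂ν)) :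
    u ≤ᵐ[μ] v := by
  obtain ⟨Bu, hBu⟩ := hφ.exists_forall_abs_comp_le hub
  obtain ⟨Bv, hBv⟩ := hφ.exists_forall_abs_comp_le hvb
  have hφu : Measurable fun x => φ (u x) := hφ.measurable.comp hu
  have hφv : Measurable fun x => φ (v x) := hφ.measurable.comp hv
  set w : G → ℝ := fun x => φ (u x) - φ (v x)
  have hw : Measurable w := hφu.sub hφv
  have hwB : ∀ x, |w x| ≤ Bu + Bv := fun x => (abs_sub _ _).trans (add_le_add (hBu x) (hBv x))
  have hH : ∀ᵐ x ∂μ, u x - v x ≤ c * (∫ z, w (x + z) ∂ν - ν.real univ * w x) := by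
    filter_upwards [H] with x hx
    rwa [integral_comp_add_sub_of_bound hφu hBu, integral_comp_add_sub_of_bound hφv hBv,
      sub_sub_sub_comm, ← integral_sub (integrable_comp_add_of_bound hφu hBu x)
        (integrable_comp_add_of_bound hφv hBv x), ← mul_sub] at hx
  have hsub : ∀ᵐ x ∂μ, 0 < w x → ν.real univ * w x < ∫ z, w (x + z) ∂ν := by
    filter_upwards [hH] with x hx hwx
    have hd : 0 < u x - v x :=
      sub_pos.mpr (lt_of_not_ge fun h => hwx.not_ge (sub_nonpos.mpr (hφm h)))
    linarith [pos_of_mul_pos_right (hd.trans_le hx) hc]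
  have hint : ∀ ε > 0, Integrable (fun x => max (w x - ε) 0) μ := by
    intro ε hε
    obtain ⟨δ, hδ, hδε⟩ := exists_pos_forall_sub_le_of_sub_lt hφ hφm M hε
    -- `(w - ε)⁺` vanishes where `u - v < δ`, so it is dominated by a multiple of `|u - v|`.
    refine (huv.norm.const_mul ((Bu + Bv) / δ)).mono'
      ((hw.sub_const ε).max measurable_const).aestronglyMeasurable
      (Eventually.of_forall fun x => ?_)
    rw [Real.norm_of_nonneg (le_max_right _ _)]
    rcases le_or_gt (w x - ε) 0 with h | h
    · rw [max_eq_right h]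
      exact mul_nonneg (div_nonneg ((abs_nonneg _).trans (hwB x)) hδ.le) (norm_nonneg _)
    · have hδuv : δ ≤ u x - v x := not_lt.mp fun hlt => by linarith [hδε _ _ (hub x) (hvb x) hlt]
      rw [max_eq_left h.le, Pi.sub_apply, Real.norm_of_nonneg (hδ.le.trans hδuv),
        div_mul_eq_mul_div, le_div_iff₀ hδ]
      nlinarith [le_abs_self (w x), hwB x]
  have hw_nonpos := ae_nonpos_of_lt_integral_comp_add hw hwB hint hsub
  filter_upwards [hH, hw_nonpos, ae_ae_add_of_ae (ν := ν) hw_nonpos] with x hx hwx hwz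
  by_contra hlt
  have hwx_nonneg : 0 ≤ w x := sub_nonneg.mpr (hφm (not_le.mp hlt).le)
  have hI : ∫ z, w (x + z) ∂ν ≤ 0 := integral_nonpos_of_ae hwz
  have hrhs : c * (∫ z, w (x + z) ∂ν - ν.real univ * w x) ≤ 0 :=
    mul_nonpos_of_nonneg_of_nonpos hc (by nlinarith [measureReal_nonneg (μ := ν) (s := univ)])
  linarith [not_le.mp hlt]

theorem ae_add_mul_integral_comp_add_le [IsFiniteMeasure ν] {φ : ℝ → ℝ} {L : ℝ≥0}
    (hφ : Monotone φ) (hL : LipschitzWith L φ) {Δ : ℝ} (hΔ : 0 ≤ Δ) (hCFL : Δ * L * ν.real univ ≤ 1)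
    {u v : G → ℝ} (hu : Measurable u) (hv : Measurable v) {M : ℝ} (hub : ∀ x, |u x| ≤ M)
    (hvb : ∀ x, |v x| ≤ M) (huv : u ≤ᵐ[μ] v) :
    ∀ᵐ x ∂μ, u x + Δ * ∫ z, (φ (u (x + z)) - φ (u x)) ∂ν ≤
      v x + Δ * ∫ z, (φ (v (x + z)) - φ (v x)) ∂ν := by
  obtain ⟨Bu, hBu⟩ := hL.continuous.exists_forall_abs_comp_le hub
  obtain ⟨Bv, hBv⟩ := hL.continuous.exists_forall_abs_comp_le hvb
  have hφu : Measurable fun x => φ (u x) := hL.continuous.measurable.comp hu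
  have hφv : Measurable fun x => φ (v x) := hL.continuous.measurable.comp hv
  have hmono := monotone_sub_mul_of_lipschitzWith hφ hL (mul_nonneg hΔ measureReal_nonneg)
    (by rwa [mul_right_comm])
  filter_upwards [huv, ae_ae_add_of_ae (ν := ν) huv] with x hx hxz
  have hI : ∫ z, φ (u (x + z)) ∂ν ≤ ∫ z, φ (v (x + z)) ∂ν :=
    integral_mono_ae (integrable_comp_add_of_bound hφu hBu x)
      (integrable_comp_add_of_bound hφv hBv x) (hxz.mono fun z hz => hφ hz)
  rw [integral_comp_add_sub_of_bound hφu hBu, integral_comp_add_sub_of_bound hφv hBv]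
  linarith [mul_le_mul_of_nonneg_left hI hΔ, hmono hx]

end Translation

theorem Lnu_congr_ae {N : ℕ} (ν : Measure (EuclideanSpace ℝ (Fin N))) [SFinite ν]
    {ψ ψ' : EuclideanSpace ℝ (Fin N) → ℝ} (h : ψ =ᵐ[volume] ψ') :
    Lnu ν ψ =ᵐ[volume] Lnu ν ψ' := by
  filter_upwards [ae_ae_add_of_ae (ν := ν) h, h] with x hxz hx
  exact integral_congr_ae (hxz.mono fun z hz => congrArg₂ (· - ·) hz hx)

theorem Favg_le_Favg_ae {N : ℕ} {t : ℕ → ℝ} {f g : EuclideanSpace ℝ (Fin N) → ℝ → ℝ} {j : ℕ}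
    (ht : t (j - 1) ≤ t j)
    (hf : ∀ᵐ x ∂volume, IntegrableOn (f x) (Ioc (t (j - 1)) (t j)))
    (hg : ∀ᵐ x ∂volume, IntegrableOn (g x) (Ioc (t (j - 1)) (t j)))
    (hfg : ∀ᵐ x ∂volume, ∀ᵐ τ ∂(volume.restrict (Ioc (t (j - 1)) (t j))), f x τ ≤ g x τ) :
    ∀ᵐ x ∂volume, Favg t f j x ≤ Favg t g j x := by
  filter_upwards [hf, hg, hfg] with x hfx hgx hfgx
  exact mul_le_mul_of_nonneg_left (integral_mono_ae hfx hgx hfgx)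
    (inv_nonneg.mpr (sub_nonneg.mpr ht))

section Scheme

variable {N : ℕ} {ν₁ ν₂ : Measure (EuclideanSpace ℝ (Fin N))} {φ₁ φ₂ : ℝ → ℝ} {Δ : ℝ}

theorem ae_scheme_step_congr [SFinite ν₁] [SFinite ν₂]
    {u u' a a' F : EuclideanSpace ℝ (Fin N) → ℝ} (hua : u =ᵐ[volume] a) (hua' : u' =ᵐ[volume] a')
    (hequ : ∀ᵐ x ∂volume,
      u x = u' x + Δ * (Lnu ν₁ (fun y => φ₁ (u y)) x + Lnu ν₂ (fun y => φ₂ (u' y)) x + F x)) :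
    ∀ᵐ x ∂volume,
      a x = a' x + Δ * (Lnu ν₁ (fun y => φ₁ (a y)) x + Lnu ν₂ (fun y => φ₂ (a' y)) x + F x) := by
  filter_upwards [hequ, hua, hua',
    Lnu_congr_ae ν₁ (ψ := fun y => φ₁ (u y)) (ψ' := fun y => φ₁ (a y)) (hua.fun_comp φ₁),
    Lnu_congr_ae ν₂ (ψ := fun y => φ₂ (u' y)) (ψ' := fun y => φ₂ (a' y)) (hua'.fun_comp φ₂)]
    with x hx h h' hL₁ hL₂
  rwa [h, h', hL₁, hL₂] at hx

theorem ae_le_of_scheme_step [IsFiniteMeasure ν₁] [IsFiniteMeasure ν₂] (hφ₁ : Continuous φ₁)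
    (hφ₁m : Monotone φ₁) {L : ℝ≥0} (hφ₂ : LipschitzWith L φ₂) (hφ₂m : Monotone φ₂)
    (hΔ : 0 ≤ Δ) (hCFL : Δ * L * ν₂.real univ ≤ 1)
    {u v u' v' Fu Fv : EuclideanSpace ℝ (Fin N) → ℝ} (hu : Integrable u volume)
    (hv : Integrable v volume) (hu_top : MemLp u ∞ volume) (hv_top : MemLp v ∞ volume)
    (hu'_top : MemLp u' ∞ volume) (hv'_top : MemLp v' ∞ volume)
    (hequ : ∀ᵐ x ∂volume,
      u x = u' x + Δ * (Lnu ν₁ (fun y => φ₁ (u y)) x + Lnu ν₂ (fun y => φ₂ (u' y)) x + Fu x))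
    (heqv : ∀ᵐ x ∂volume,
      v x = v' x + Δ * (Lnu ν₁ (fun y => φ₁ (v y)) x + Lnu ν₂ (fun y => φ₂ (v' y)) x + Fv x))
    (hle : u' ≤ᵐ[volume] v') (hF : Fu ≤ᵐ[volume] Fv) : u ≤ᵐ[volume] v := by
  obtain ⟨a, ha, ⟨Ma, hMa⟩, hua⟩ := hu_top.exists_measurable_bounded_ae_eq
  obtain ⟨b, hb, ⟨Mb, hMb⟩, hvb⟩ := hv_top.exists_measurable_bounded_ae_eq
  obtain ⟨a', ha', ⟨Ma', hMa'⟩, hua'⟩ := hu'_top.exists_measurable_bounded_ae_eq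
  obtain ⟨b', hb', ⟨Mb', hMb'⟩, hvb'⟩ := hv'_top.exists_measurable_bounded_ae_eq
  have hexplicit := ae_add_mul_integral_comp_add_le (ν := ν₂) hφ₂m hφ₂ hΔ hCFL ha' hb'
    (fun x => (hMa' x).trans (le_max_left Ma' Mb')) (fun x => (hMb' x).trans (le_max_right _ _))
    ((hua'.symm.trans_le hle).trans_eq hvb')
  refine (hua.trans_le ?_).trans_eq hvb.symm
  refine ae_le_of_sub_le_mul_integral_comp_add (ν := ν₁) hφ₁ hφ₁m ha hb
    (fun x => (hMa x).trans (le_max_left Ma Mb)) (fun x => (hMb x).trans (le_max_right _ _))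
    ((hu.congr hua).sub (hv.congr hvb)) hΔ ?_
  filter_upwards [ae_scheme_step_congr hua hua' hequ, ae_scheme_step_congr hvb hvb' heqv,
    hexplicit, hF] with x hax hbx hexplicit_x hFx
  simp only [Lnu] at hax hbx
  linarith [mul_le_mul_of_nonneg_left hFx hΔ]

end Scheme

theorem stmt12_general {N : ℕ}
    (T : ℝ) (J : ℕ)
    (t : ℕ → ℝ) (ht0 : t 0 = 0) (htJ : t J = T)
    (htmono : ∀ j < J, t j < t (j + 1))
    (u₀ v₀ : EuclideanSpace ℝ (Fin N) → ℝ)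
    (f g : EuclideanSpace ℝ (Fin N) → ℝ → ℝ)
    (hfmeas : Measurable (Function.uncurry f))
    (hgmeas : Measurable (Function.uncurry g))
    (hfint : ∫⁻ τ in Set.Ioc 0 T,
        (eLpNorm (fun x => f x τ) 1 volume + eLpNorm (fun x => f x τ) ∞ volume) < ∞)
    (hgint : ∫⁻ τ in Set.Ioc 0 T,
        (eLpNorm (fun x => g x τ) 1 volume + eLpNorm (fun x => g x τ) ∞ volume) < ∞)
    (ν₁ ν₂ : Measure (EuclideanSpace ℝ (Fin N)))
    [IsFiniteMeasure ν₁] [IsFiniteMeasure ν₂]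
    (φ₁ φ₂ : ℝ → ℝ)
    (hφ₁cont : Continuous φ₁) (hφ₁mono : Monotone φ₁)
    (L : ℝ≥0) (hφ₂lip : LipschitzWith L φ₂) (hφ₂mono : Monotone φ₂)
    (hCFL : ∀ j, 1 ≤ j → j ≤ J →
      ENNReal.ofReal (t j - t (j - 1)) * (L : ℝ≥0∞) * ν₂ Set.univ ≤ 1)
    (U V : ℕ → EuclideanSpace ℝ (Fin N) → ℝ)
    (hU : IsSchemeSol ν₁ ν₂ φ₁ φ₂ t J u₀ f U)
    (hV : IsSchemeSol ν₁ ν₂ φ₁ φ₂ t J v₀ g V)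
    (hdata0 : ∀ᵐ x ∂(volume : Measure (EuclideanSpace ℝ (Fin N))), u₀ x ≤ v₀ x)
    (hdataf : ∀ᵐ p ∂((volume : Measure (EuclideanSpace ℝ (Fin N))).prod
        ((volume : Measure ℝ).restrict (Set.Ioo 0 T))), f p.1 p.2 ≤ g p.1 p.2) :
    ∀ j ≤ J, ∀ᵐ x ∂(volume : Measure (EuclideanSpace ℝ (Fin N))), U j x ≤ V j x := by
  have hgrid : MonotoneOn t (Iic J) :=
    monotoneOn_of_le_add_one ordConnected_Iic fun j _ _ hj => (htmono j hj).le
  have hf := ae_integrable_of_lintegral_eLpNorm_lt_top hfmeas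
    ((lintegral_mono fun τ => le_self_add).trans_lt hfint)
  have hg := ae_integrable_of_lintegral_eLpNorm_lt_top hgmeas
    ((lintegral_mono fun τ => le_self_add).trans_lt hgint)
  have hfg : ∀ᵐ x ∂volume, ∀ᵐ τ ∂(volume.restrict (Ioc 0 T)), f x τ ≤ g x τ := by
    rw [← Measure.restrict_congr_set Ioo_ae_eq_Ioc]
    exact Measure.ae_ae_of_ae_prod hdataf
  intro j hj
  induction j with
  | zero =>
    filter_upwards [hU.2.1, hV.2.1, hdata0] with x hu hv h
    rwa [hu, hv]
  | succ j ih =>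
    have hΔ : 0 ≤ t (j + 1) - t j := sub_nonneg.mpr (htmono j hj).le
    have hsub : Ioc (t j) (t (j + 1)) ⊆ Ioc 0 T :=
      Ioc_subset_Ioc (ht0 ▸ hgrid (Nat.zero_le J) (mem_Iic.mpr (by omega)) (Nat.zero_le j))
        (htJ ▸ hgrid hj (le_refl J) hj)
    have hCFL' : (t (j + 1) - t j) * L * ν₂.real univ ≤ 1 := by
      have := ENNReal.toReal_mono ENNReal.one_ne_top (hCFL (j + 1) (by omega) hj)
      rwa [toReal_mul, toReal_mul, Nat.add_sub_cancel, toReal_ofReal hΔ, toReal_one] at this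
    exact ae_le_of_scheme_step hφ₁cont hφ₁mono hφ₂lip hφ₂mono hΔ hCFL' (hU.1 _ hj).1
      (hV.1 _ hj).1 (hU.1 _ hj).2 (hV.1 _ hj).2 (hU.1 j (by omega)).2 (hV.1 j (by omega)).2
      (hU.2.2 (j + 1) (by omega) hj) (hV.2.2 (j + 1) (by omega) hj) (ih (by omega))
      (Favg_le_Favg_ae (hgrid (mem_Iic.mpr (by omega)) hj (by omega))
        (hf.mono fun x hx => IntegrableOn.mono_set hx hsub)
        (hg.mono fun x hx => IntegrableOn.mono_set hx hsub)
        (hfg.mono fun x hx => ae_restrict_of_ae_restrict_of_subset hsub hx))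

theorem stmt12 {N : ℕ} (hN : 1 ≤ N)
    (T : ℝ) (hT : 0 < T) (J : ℕ) (hJ : 1 ≤ J)
    (t : ℕ → ℝ) (ht0 : t 0 = 0) (htJ : t J = T)
    (htmono : ∀ j < J, t j < t (j + 1))
    (u₀ v₀ : EuclideanSpace ℝ (Fin N) → ℝ)
    (hu₀1 : Integrable u₀ volume) (hu₀inf : MemLp u₀ ∞ volume)
    (hv₀1 : Integrable v₀ volume) (hv₀inf : MemLp v₀ ∞ volume)
    (f g : EuclideanSpace ℝ (Fin N) → ℝ → ℝ)
    (hfmeas : Measurable (Function.uncurry f))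
    (hgmeas : Measurable (Function.uncurry g))
    (hfint : ∫⁻ τ in Set.Ioc 0 T,
        (eLpNorm (fun x => f x τ) 1 volume + eLpNorm (fun x => f x τ) ∞ volume) < ∞)
    (hgint : ∫⁻ τ in Set.Ioc 0 T,
        (eLpNorm (fun x => g x τ) 1 volume + eLpNorm (fun x => g x τ) ∞ volume) < ∞)
    (ν₁ ν₂ : Measure (EuclideanSpace ℝ (Fin N)))
    [IsFiniteMeasure ν₁] [IsFiniteMeasure ν₂]
    (hsym₁ : ν₁.map (fun z => -z) = ν₁) (hsym₂ : ν₂.map (fun z => -z) = ν₂)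
    (φ₁ φ₂ : ℝ → ℝ)
    (hφ₁cont : Continuous φ₁) (hφ₁mono : Monotone φ₁) (hφ₁0 : φ₁ 0 = 0)
    (L : ℝ≥0) (hφ₂lip : LipschitzWith L φ₂) (hφ₂mono : Monotone φ₂) (hφ₂0 : φ₂ 0 = 0)
    (hCFL : ∀ j, 1 ≤ j → j ≤ J →
      ENNReal.ofReal (t j - t (j - 1)) * (L : ℝ≥0∞) * ν₂ Set.univ ≤ 1)
    (U V : ℕ → EuclideanSpace ℝ (Fin N) → ℝ)
    (hU : IsSchemeSol ν₁ ν₂ φ₁ φ₂ t J u₀ f U)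
    (hV : IsSchemeSol ν₁ ν₂ φ₁ φ₂ t J v₀ g V)
    (hdata0 : ∀ᵐ x ∂(volume : Measure (EuclideanSpace ℝ (Fin N))), u₀ x ≤ v₀ x)
    (hdataf : ∀ᵐ p ∂((volume : Measure (EuclideanSpace ℝ (Fin N))).prod
        ((volume : Measure ℝ).restrict (Set.Ioo 0 T))), f p.1 p.2 ≤ g p.1 p.2) :
    ∀ j ≤ J, ∀ᵐ x ∂(volume : Measure (EuclideanSpace ℝ (Fin N))), U j x ≤ V j x :=
  stmt12_general T J t ht0 htJ htmono u₀ v₀ f g hfmeas hgmeas hfint hgint ν₁ ν₂ φ₁ φ₂ hφ₁cont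
    hφ₁mono L hφ₂lip hφ₂mono hCFL U V hU hV hdata0 hdataf
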